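/- arXiv:1606.04191 — 3 statements merged into one kernel-verified Lean document; each statement's English description precedes it below -/
import Mathlib

section
/- Let M, N be positive integers, let h ∈ ℂ^M, let σ_a ∈ ℝ, and define p(w) = Σ_{η=1}^{N} |h^H w_η|² + σ_a² for w = (w_1, …, w_N) with each w_η ∈ ℂ^M. Then for all w, ŵ ∈ (ℂ^M)^N and all α, α̂ ∈ (0,1): (1 − α²)·p(w) ≥ 2(1 − α̂²)·[ Σ_{η=1}^{N} Re( conj(h^H ŵ_η)·(h^H w_η) ) + σ_a² ] − p(ŵ)·(1 − α̂²)²/(1 − α²). -/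
/-- Hermitian inner product `h^H w = ∑ i, conj (h i) * w i` on `ℂ^M`
(conjugate-linear in `h`). -/
noncomputable def hermInner {M : ℕ} (h w : Fin M → ℂ) : ℂ :=
  ∑ i, (starRingEnd ℂ) (h i) * w i

/-- Total received RF power `p(w) = ∑ η, |h^H w_η|² + σa²` at a user with
channel `h` under beamformers `w_1, …, w_N` and antenna noise variance `σa²`. -/
noncomputable def rfPower {M N : ℕ} (h : Fin M → ℂ) (σa : ℝ)
    (w : Fin N → Fin M → ℂ) : ℝ :=
  (∑ η, ‖hermInner h (w η)‖ ^ 2) + σa ^ 2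

/-!
With `t = 1 - α²` and `s = 1 - α̂²`, the bracket on the right is the real polarization
`Σ Re(conj(h^H ŵ_η) h^H w_η) + σ_a²` of `p`. Expanding `|t h^H w_η - s h^H ŵ_η|² ≥ 0` for
each `η`, and `((t - s) σ_a)² ≥ 0`, gives `2 s t · (bracket) ≤ t² p(w) + s² p(ŵ)`; dividing by
`t > 0` is the claim.
-/

open ComplexConjugate

lemma two_mul_mul_real_inner_le {E : Type*} [NormedAddCommGroup E] [InnerProductSpace ℝ E]
    (x y : E) (s t : ℝ) :
    2 * s * t * inner ℝ x y ≤ s ^ 2 * ‖x‖ ^ 2 + t ^ 2 * ‖y‖ ^ 2 := by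
  have expand := norm_sub_sq_real (s • x) (t • y)
  rw [real_inner_smul_left, real_inner_smul_right, norm_smul, norm_smul, Real.norm_eq_abs,
    Real.norm_eq_abs, mul_pow, mul_pow, sq_abs, sq_abs] at expand
  nlinarith [sq_nonneg ‖s • x - t • y‖]

lemma two_mul_mul_re_conj_mul_le (a b : ℂ) (s t : ℝ) :
    2 * s * t * (conj a * b).re ≤ s ^ 2 * ‖a‖ ^ 2 + t ^ 2 * ‖b‖ ^ 2 := by
  simpa only [Complex.inner, mul_comm b] using two_mul_mul_real_inner_le a b s t

lemma two_mul_mul_polarization_le_rfPower {M N : ℕ} (h : Fin M → ℂ) (σa : ℝ)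
    (w wh : Fin N → Fin M → ℂ) (s t : ℝ) :
    2 * s * t * ((∑ η, (conj (hermInner h (wh η)) * hermInner h (w η)).re) + σa ^ 2) ≤
      s ^ 2 * rfPower h σa wh + t ^ 2 * rfPower h σa w := by
  have beams : 2 * s * t * ∑ η, (conj (hermInner h (wh η)) * hermInner h (w η)).re ≤
      s ^ 2 * ∑ η, ‖hermInner h (wh η)‖ ^ 2 + t ^ 2 * ∑ η, ‖hermInner h (w η)‖ ^ 2 := by
    simp only [Finset.mul_sum, ← Finset.sum_add_distrib]
    exact Finset.sum_le_sum fun η _ => two_mul_mul_re_conj_mul_le _ _ s t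
  have noise : 2 * s * t * σa ^ 2 ≤ s ^ 2 * σa ^ 2 + t ^ 2 * σa ^ 2 := by
    nlinarith [two_mul_le_add_sq (s * σa) (t * σa)]
  unfold rfPower
  linarith

theorem surrogate_lower_bound_general (M N : ℕ)
    (h : Fin M → ℂ) (σa : ℝ) (w wh : Fin N → Fin M → ℂ) (α αh : ℝ)
    (hα : α ∈ Set.Ioo (0 : ℝ) 1) :
    (1 - α ^ 2) * rfPower h σa w ≥
      2 * (1 - αh ^ 2) *
          ((∑ η, ((starRingEnd ℂ) (hermInner h (wh η)) * hermInner h (w η)).re) + σa ^ 2) -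
        rfPower h σa wh * (1 - αh ^ 2) ^ 2 / (1 - α ^ 2) := by
  have ht : 0 < 1 - α ^ 2 := by nlinarith [hα.1, hα.2]
  have key := two_mul_mul_polarization_le_rfPower h σa w wh (1 - αh ^ 2) (1 - α ^ 2)
  rw [ge_iff_le, sub_le_iff_le_add, ← sub_le_iff_le_add', le_div_iff₀ ht]
  linarith

/-- Inequality (in1) of Lemma 1: the harvested-energy term `(1 - α²) p(w)` is
lower bounded by the surrogate linearized at `(wh, αh)`. -/
theorem surrogate_lower_bound (M N : ℕ) (hM : 0 < M) (hN : 0 < N)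
    (h : Fin M → ℂ) (σa : ℝ) (w wh : Fin N → Fin M → ℂ) (α αh : ℝ)
    (hα : α ∈ Set.Ioo (0 : ℝ) 1) (hαh : αh ∈ Set.Ioo (0 : ℝ) 1) :
    (1 - α ^ 2) * rfPower h σa w ≥
      2 * (1 - αh ^ 2) *
          ((∑ η, ((starRingEnd ℂ) (hermInner h (wh η)) * hermInner h (w η)).re) + σa ^ 2) -
        rfPower h σa wh * (1 - αh ^ 2) ^ 2 / (1 - α ^ 2) :=
  surrogate_lower_bound_general M N h σa w wh α αh hα
end

section
/- Let M, N be positive integers, h ∈ ℂ^M, σ_a ∈ ℝ, ŵ ∈ (ℂ^M)^N, and α̂ ∈ (0,1). Define p(ŵ) = Σ_{η=1}^{N} |h^H ŵ_η|² + σ_a². Then the surrogate function p̆(w, α) = 2(1−α̂²)·[ Σ_{η=1}^{N} Re( conj(h^H ŵ_η)·(h^H w_η) ) + σ_a² ] − p(ŵ)·(1−α̂²)²/(1−α²) is concave (with respect to real scalars) on the convex set (ℂ^M)^N × (0,1), jointly in (w, α). -/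
/-!
The surrogate splits as `A(w) - c / (1 - α²)` with `A` real-affine in `w` and
`c = p(ŵ) (1 - α̂²)² ≥ 0`. The function `α ↦ 1 / (1 - α²)` is convex on `(-1, 1)`, being the
reciprocal of the positive concave function `1 - α²`; a concave function of `w` minus a convex
function of `α` is jointly concave.
-/

open Set

section Convexity

variable {𝕜 E F β : Type*} [AddCommGroup E] [AddCommGroup F]

theorem ConcaveOn.convexOn_inv [Field 𝕜] [LinearOrder 𝕜] [IsStrictOrderedRing 𝕜] [Module 𝕜 E]
    {s : Set E} {f : E → 𝕜} (hf : ConcaveOn 𝕜 s f)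
    (hpos : ∀ x ∈ s, 0 < f x) : ConvexOn 𝕜 s fun x => (f x)⁻¹ := by
  refine ⟨hf.1, fun x hx y hy a b ha hb hab => ?_⟩
  have hcombo : 0 < a • f x + b • f y := convex_Ioi 0 (hpos x hx) (hpos y hy) ha hb hab
  calc (f (a • x + b • y))⁻¹ ≤ (a • f x + b • f y)⁻¹ := inv_anti₀ hcombo (hf.2 hx hy ha hb hab)
    _ ≤ a • (f x)⁻¹ + b • (f y)⁻¹ := by
      simpa only [zpow_neg_one] using
        (convexOn_zpow (-1)).2 (hpos x hx) (hpos y hy) ha hb hab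

theorem ConcaveOn.prod_sub [Ring 𝕜] [PartialOrder 𝕜] [Module 𝕜 E] [Module 𝕜 F]
    [AddCommGroup β] [PartialOrder β] [IsOrderedAddMonoid β] [Module 𝕜 β]
    {s : Set E} {t : Set F} {f : E → β} {g : F → β}
    (hf : ConcaveOn 𝕜 s f) (hg : ConvexOn 𝕜 t g) :
    ConcaveOn 𝕜 (s ×ˢ t) fun p : E × F => f p.1 - g p.2 := by
  have hst : Convex 𝕜 (s ×ˢ t) := hf.1.prod hg.1
  exact ((hf.comp_linearMap (LinearMap.fst 𝕜 E F)).subset (fun p hp => hp.1) hst).sub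
    ((hg.comp_linearMap (LinearMap.snd 𝕜 E F)).subset (fun p hp => hp.2) hst)

end Convexity

theorem convexOn_inv_one_sub_sq : ConvexOn ℝ (Ioo (-1) 1) fun x : ℝ => (1 - x ^ 2)⁻¹ := by
  have hconc : ConcaveOn ℝ univ fun x : ℝ => 1 - x ^ 2 :=
    (concaveOn_const 1 convex_univ).sub (even_two.convexOn_pow)
  refine (hconc.subset (subset_univ _) (convex_Ioo _ _)).convexOn_inv fun x hx => ?_
  nlinarith [hx.1, hx.2]

theorem hermInner_add {M : ℕ} (h u v : Fin M → ℂ) :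
    hermInner h (u + v) = hermInner h u + hermInner h v :=
  dotProduct_add _ _ _

theorem hermInner_smul {M : ℕ} {R : Type*} [Monoid R] [DistribMulAction R ℂ]
    [SMulCommClass R ℂ ℂ] (h : Fin M → ℂ) (c : R) (w : Fin M → ℂ) :
    hermInner h (c • w) = c • hermInner h w :=
  dotProduct_smul _ _ _

theorem rfPower_nonneg {M N : ℕ} (h : Fin M → ℂ) (σa : ℝ) (w : Fin N → Fin M → ℂ) :
    0 ≤ rfPower h σa w := by
  unfold rfPower
  positivity

noncomputable def linearizedPower {M N : ℕ} (h : Fin M → ℂ) (wh : Fin N → Fin M → ℂ) :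
    (Fin N → Fin M → ℂ) →ₗ[ℝ] ℝ where
  toFun w := ∑ η, ((starRingEnd ℂ) (hermInner h (wh η)) * hermInner h (w η)).re
  map_add' u v := by
    simp only [Pi.add_apply, hermInner_add, mul_add, Complex.add_re, Finset.sum_add_distrib]
  map_smul' r w := by
    simp only [Pi.smul_apply, hermInner_smul, mul_smul_comm, Complex.smul_re, Finset.smul_sum,
      RingHom.id_apply]

theorem surrogate_concave_general (M N : ℕ)
    (h : Fin M → ℂ) (σa : ℝ) (wh : Fin N → Fin M → ℂ) (αh : ℝ) :
    ConcaveOn ℝ ((Set.univ : Set (Fin N → Fin M → ℂ)) ×ˢ Set.Ioo (0 : ℝ) 1)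
      (fun p : (Fin N → Fin M → ℂ) × ℝ =>
        2 * (1 - αh ^ 2) *
            ((∑ η, ((starRingEnd ℂ) (hermInner h (wh η)) * hermInner h (p.1 η)).re) + σa ^ 2) -
          rfPower h σa wh * (1 - αh ^ 2) ^ 2 / (1 - p.2 ^ 2)) := by
  have haffine : ConcaveOn ℝ univ
      fun w => 2 * (1 - αh ^ 2) * (linearizedPower h wh w + σa ^ 2) :=
    (((2 * (1 - αh ^ 2)) • linearizedPower h wh).concaveOn convex_univ).add_const
      (2 * (1 - αh ^ 2) * σa ^ 2) |>.congr fun w _ => by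
        simp only [Pi.add_apply, LinearMap.smul_apply, smul_eq_mul]
        ring
  have hc : 0 ≤ rfPower h σa wh * (1 - αh ^ 2) ^ 2 :=
    mul_nonneg (rfPower_nonneg h σa wh) (sq_nonneg _)
  have hpole : ConvexOn ℝ (Ioo 0 1)
      fun α : ℝ => rfPower h σa wh * (1 - αh ^ 2) ^ 2 / (1 - α ^ 2) :=
    ((convexOn_inv_one_sub_sq.subset (Ioo_subset_Ioo_left (by norm_num)) (convex_Ioo 0 1)).smul
      hc).congr fun α _ => (div_eq_mul_inv _ _).symm
  exact haffine.prod_sub hpole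

/-- Concavity claim of Lemma 1: the surrogate `p̆(w, α)` built at the fixed
linearization point `(wh, αh)` is jointly concave (over real scalars) in
`(w, α)` on `(ℂ^M)^N × (0, 1)`. -/
theorem surrogate_concave (M N : ℕ) (hM : 0 < M) (hN : 0 < N)
    (h : Fin M → ℂ) (σa : ℝ) (wh : Fin N → Fin M → ℂ) (αh : ℝ)
    (hαh : αh ∈ Set.Ioo (0 : ℝ) 1) :
    ConcaveOn ℝ ((Set.univ : Set (Fin N → Fin M → ℂ)) ×ˢ Set.Ioo (0 : ℝ) 1)
      (fun p : (Fin N → Fin M → ℂ) × ℝ =>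
        2 * (1 - αh ^ 2) *
            ((∑ η, ((starRingEnd ℂ) (hermInner h (wh η)) * hermInner h (p.1 η)).re) + σa ^ 2) -
          rfPower h σa wh * (1 - αh ^ 2) ^ 2 / (1 - p.2 ^ 2)) :=
  surrogate_concave_general M N h σa wh αh
end

section
/- Let M, N be positive integers, and for n₁ = 1, …, N₁ let h_{n₁} ∈ ℂ^M, ζ_{n₁} ≥ 0, and σ_a ∈ ℝ. For w ∈ (ℂ^M)^N define p_{n₁}(w) = Σ_{η=1}^{N} |h_{n₁}^H w_η|² + σ_a², and for α = (α_{n₁}) ∈ (0,1)^{N₁} define F(w, α) = Σ_{n₁=1}^{N₁} ζ_{n₁}(1 − α_{n₁}²)·p_{n₁}(w). Fix (ŵ, α̂) with α̂ ∈ (0,1)^{N₁} and define the surrogate F̂(w, α) = Σ_{n₁=1}^{N₁} ζ_{n₁}·p̆_{n₁}(w, α_{n₁}), where p̆_{n₁}(w, α) = 2(1−α̂_{n₁}²)[Σ_η Re(conj(h_{n₁}^H ŵ_η)·(h_{n₁}^H w_η)) + σ_a²] − p_{n₁}(ŵ)(1−α̂_{n₁}²)²/(1−α²). Then for any (w, α)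 with α ∈ (0,1)^{N₁}, if F̂(w, α) ≥ F̂(ŵ, α̂), then F(w, α) ≥ F(ŵ, α̂). -/
/-- Surrogate (minorant) of the harvested energy `(1 - α²) p(w)` obtained by
linearization at the point `(wh, αh)`. -/
noncomputable def breve {M N : ℕ} (h : Fin M → ℂ) (σa : ℝ)
    (wh : Fin N → Fin M → ℂ) (αh : ℝ) (w : Fin N → Fin M → ℂ) (α : ℝ) : ℝ :=
  2 * (1 - αh ^ 2) *
      ((∑ η, ((starRingEnd ℂ) (hermInner h (wh η)) * hermInner h (w η)).re) + σa ^ 2) -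
    rfPower h σa wh * (1 - αh ^ 2) ^ 2 / (1 - α ^ 2)

/-
The surrogate is exact at the linearization point and lies below the true objective
everywhere: with `t = 1 - α² > 0` and `c = 1 - α̂²`, every term of `F̂` is bounded by
the weighted AM-GM inequality `2 c Re(conj a · b) ≤ t |b|² + c² |a|² / t`.
Hence `F(ŵ, α̂) = F̂(ŵ, α̂) ≤ F̂(w, α) ≤ F(w, α)`.
-/

lemma two_mul_mul_le_mul_sq_add_sq_div {t : ℝ} (ht : 0 < t) (x y : ℝ) :
    2 * x * y ≤ t * y ^ 2 + x ^ 2 / t := by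
  rw [← sub_nonneg]
  have key : t * y ^ 2 + x ^ 2 / t - 2 * x * y = (t * y - x) ^ 2 / t := by
    field_simp
    ring
  rw [key]
  positivity

lemma Complex.two_mul_re_conj_mul_le {t : ℝ} (ht : 0 < t) (c : ℝ) (a b : ℂ) :
    2 * c * (starRingEnd ℂ a * b).re ≤ t * ‖b‖ ^ 2 + c ^ 2 * ‖a‖ ^ 2 / t :=
  calc 2 * c * (starRingEnd ℂ a * b).re
      = 2 * ((c : ℂ) * starRingEnd ℂ a * b).re := by
        rw [mul_assoc (c : ℂ), Complex.re_ofReal_mul, mul_assoc]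
    _ ≤ 2 * ‖(c : ℂ) * starRingEnd ℂ a * b‖ := by gcongr; exact Complex.re_le_norm _
    _ = 2 * (|c| * ‖a‖) * ‖b‖ := by
        rw [norm_mul, norm_mul, Complex.norm_real, Real.norm_eq_abs, Complex.norm_conj]
        ring
    _ ≤ t * ‖b‖ ^ 2 + (|c| * ‖a‖) ^ 2 / t := two_mul_mul_le_mul_sq_add_sq_div ht _ _
    _ = t * ‖b‖ ^ 2 + c ^ 2 * ‖a‖ ^ 2 / t := by rw [mul_pow, sq_abs]

lemma breve_self {M N : ℕ} (h : Fin M → ℂ) (σa : ℝ) (wh : Fin N → Fin M → ℂ) {αh : ℝ}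
    (hαh : αh ^ 2 ≠ 1) :
    breve h σa wh αh wh αh = (1 - αh ^ 2) * rfPower h σa wh := by
  have hre : ∀ z : ℂ, (starRingEnd ℂ z * z).re = ‖z‖ ^ 2 := fun z => by
    rw [mul_comm, Complex.mul_conj, Complex.ofReal_re, Complex.normSq_eq_norm_sq]
  have ht : 1 - αh ^ 2 ≠ 0 := sub_ne_zero.2 hαh.symm
  simp only [breve, rfPower, hre]
  field_simp
  ring

lemma breve_le {M N : ℕ} (h : Fin M → ℂ) (σa : ℝ) (wh : Fin N → Fin M → ℂ) (αh : ℝ)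
    (w : Fin N → Fin M → ℂ) {α : ℝ} (hα : α ^ 2 < 1) :
    breve h σa wh αh w α ≤ (1 - α ^ 2) * rfPower h σa w := by
  set t := 1 - α ^ 2
  set c := 1 - αh ^ 2
  have ht : 0 < t := sub_pos.2 hα
  have hsum : 2 * c * ∑ η, (starRingEnd ℂ (hermInner h (wh η)) * hermInner h (w η)).re ≤
      t * ∑ η, ‖hermInner h (w η)‖ ^ 2 + c ^ 2 * (∑ η, ‖hermInner h (wh η)‖ ^ 2) / t := by
    rw [Finset.mul_sum, Finset.mul_sum, Finset.mul_sum, Finset.sum_div, ← Finset.sum_add_distrib]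
    exact Finset.sum_le_sum fun η _ => Complex.two_mul_re_conj_mul_le ht c _ _
  have hnoise := two_mul_mul_le_mul_sq_add_sq_div ht (c * σa) σa
  have expand : breve h σa wh αh w α = 2 * c * ∑ η,
      (starRingEnd ℂ (hermInner h (wh η)) * hermInner h (w η)).re + 2 * (c * σa) * σa -
      c ^ 2 * (∑ η, ‖hermInner h (wh η)‖ ^ 2) / t - (c * σa) ^ 2 / t := by
    simp only [breve, rfPower]
    ring
  rw [expand, rfPower]
  linarith

theorem sum_eh_monotone_improvement_general (M N N₁ : ℕ)
    (h : Fin N₁ → Fin M → ℂ) (ζ : Fin N₁ → ℝ) (hζ : ∀ n, 0 ≤ ζ n) (σa : ℝ)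
    (wh : Fin N → Fin M → ℂ) (αh : Fin N₁ → ℝ)
    (hαh : ∀ n, αh n ∈ Set.Ioo (0 : ℝ) 1)
    (w : Fin N → Fin M → ℂ) (α : Fin N₁ → ℝ)
    (hα : ∀ n, α n ∈ Set.Ioo (0 : ℝ) 1)
    (hsur : (∑ n, ζ n * breve (h n) σa wh (αh n) w (α n)) ≥
            (∑ n, ζ n * breve (h n) σa wh (αh n) wh (αh n))) :
    (∑ n, ζ n * ((1 - α n ^ 2) * rfPower (h n) σa w)) ≥
      (∑ n, ζ n * ((1 - αh n ^ 2) * rfPower (h n) σa wh)) := by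
  have sq_lt_one : ∀ {x : ℝ}, x ∈ Set.Ioo (0 : ℝ) 1 → x ^ 2 < 1 := fun hx =>
    pow_lt_one₀ hx.1.le hx.2 two_ne_zero
  calc ∑ n, ζ n * ((1 - αh n ^ 2) * rfPower (h n) σa wh)
      = ∑ n, ζ n * breve (h n) σa wh (αh n) wh (αh n) := by
        simp only [breve_self _ _ _ (sq_lt_one (hαh _)).ne]
    _ ≤ ∑ n, ζ n * breve (h n) σa wh (αh n) w (α n) := hsur
    _ ≤ ∑ n, ζ n * ((1 - α n ^ 2) * rfPower (h n) σa w) :=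
        Finset.sum_le_sum fun n _ =>
          mul_le_mul_of_nonneg_left (breve_le _ _ _ _ _ (sq_lt_one (hα n))) (hζ n)

/-- Monotonic improvement of Algorithm 1: if the surrogate sum objective at
`(w, α)` is at least its value at the linearization point `(wh, αh)`, then the
true sum harvested energy at `(w, α)` is at least its value at `(wh, αh)`. -/
theorem sum_eh_monotone_improvement (M N N₁ : ℕ) (hM : 0 < M) (hN : 0 < N)
    (h : Fin N₁ → Fin M → ℂ) (ζ : Fin N₁ → ℝ) (hζ : ∀ n, 0 ≤ ζ n) (σa : ℝ)
    (wh : Fin N → Fin M → ℂ) (αh : Fin N₁ → ℝ)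
    (hαh : ∀ n, αh n ∈ Set.Ioo (0 : ℝ) 1)
    (w : Fin N → Fin M → ℂ) (α : Fin N₁ → ℝ)
    (hα : ∀ n, α n ∈ Set.Ioo (0 : ℝ) 1)
    (hsur : (∑ n, ζ n * breve (h n) σa wh (αh n) w (α n)) ≥
            (∑ n, ζ n * breve (h n) σa wh (αh n) wh (αh n))) :
    (∑ n, ζ n * ((1 - α n ^ 2) * rfPower (h n) σa w)) ≥
      (∑ n, ζ n * ((1 - αh n ^ 2) * rfPower (h n) σa wh)) :=
  sum_eh_monotone_improvement_general M N N₁ h ζ hζ σa wh αh hαh w α hα hsur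
end
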